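/- Conservativity of observational equivalence under extension by unmentioned names: suppose P' ⊇ P and no name defined by P'∖P (i.e., no head of a rule in P'∖P) occurs in M, N, or P. Then M ≈_P N if and only if M ≈_{P'} N. -/

import Mathlib

/-- Terms of continuation calculus: names (coded as naturals) and dot. -/
inductive Tm where
  | name : ℕ → Tm
  | dot : Tm → Tm → Tm
deriving DecidableEq

/-- Right-hand sides of rules: names, variables (de Bruijn-style indices
into the left-hand side's variable list), and dot. -/
inductive Rhs where
  | name : ℕ → Rhs
  | var : ℕ → Rhs
  | dot : Rhs → Rhs → Rhs
deriving DecidableEq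

/-- A rule `n.x₁.⋯.xₖ → r`: head name, arity `k`, and right-hand side. -/
structure Rule where
  head : ℕ
  arity : ℕ
  rhs : Rhs
deriving DecidableEq

/-- A program is a finite set of rules. -/
abbrev Program := Finset Rule

/-- Variables occurring in a right-hand side. -/
def Rhs.HasVar : Rhs → ℕ → Prop
  | .name _, _ => False
  | .var w, v => w = v
  | .dot a b, v => a.HasVar v ∨ b.HasVar v

/-- Well-formedness: every variable of a right-hand side occurs in the
left-hand side, and there is at most one rule per head name. -/
def Program.Wf (P : Program) : Prop :=
  (∀ r ∈ P, ∀ v, r.rhs.HasVar v → v < r.arity) ∧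
  (∀ r₁ ∈ P, ∀ r₂ ∈ P, r₁.head = r₂.head → r₁ = r₂)

/-- `n.t₁.⋯.tₖ` : left-associated application of a term to a list of terms. -/
def Tm.apps : Tm → List Tm → Tm
  | h, [] => h
  | h, t :: ts => Tm.apps (h.dot t) ts

/-- Instantiation of a right-hand side with the terms matched by the
left-hand side variables; fails if some variable is out of range. -/
def Rhs.inst (ts : List Tm) : Rhs → Option Tm
  | .name n => some (.name n)
  | .var v => ts[v]?
  | .dot a b => do pure (.dot (← a.inst ts) (← b.inst ts))

/-- One-step evaluation `M →_P N`. -/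
def Step (P : Program) (M N : Tm) : Prop :=
  ∃ r ∈ P, ∃ ts : List Tm, ts.length = r.arity ∧
    M = Tm.apps (.name r.head) ts ∧ r.rhs.inst ts = some N

/-- Multi-step evaluation `M →*_P N`. -/
def Steps (P : Program) : Tm → Tm → Prop := Relation.ReflTransGen (Step P)

/-- `M` is final: it has no successor. -/
def Final (P : Program) (M : Tm) : Prop := ¬ ∃ N, Step P M N

/-- `M` terminates: it evaluates to a final term. -/
def Terminates (P : Program) (M : Tm) : Prop := ∃ N, Steps P M N ∧ Final P N

/-- The name `m` occurs in a term. -/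
def Tm.HasName (m : ℕ) : Tm → Prop
  | .name n => n = m
  | .dot a b => a.HasName m ∨ b.HasName m

/-- The name `m` occurs in a right-hand side. -/
def Rhs.HasName (m : ℕ) : Rhs → Prop
  | .name n => n = m
  | .var _ => False
  | .dot a b => a.HasName m ∨ b.HasName m

/-- The name `m` occurs (is mentioned) in a program. -/
def Program.HasName (P : Program) (m : ℕ) : Prop :=
  ∃ r ∈ P, r.head = m ∨ r.rhs.HasName m

/-- The name `m` is defined by the program (is the head of some rule). -/
def Program.Defines (P : Program) (m : ℕ) : Prop :=
  ∃ r ∈ P, r.head = m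

/-- Substitution of a term for a name, `M[fr := t]`. -/
def Tm.subName (m : ℕ) (t : Tm) : Tm → Tm
  | .name n => if n = m then t else .name n
  | .dot a b => .dot (Tm.subName m t a) (Tm.subName m t b)

/-- Common reduct relation `M =_P N`. -/
def CommonRed (P : Program) (M N : Tm) : Prop :=
  ∃ t, Steps P M t ∧ Steps P N t

/-- Observational equivalence `M ≈_P N`. -/
def ObsEq (P : Program) (M N : Tm) : Prop :=
  ∀ P' : Program, P'.Wf → P ⊆ P' →
    ∀ X : Tm, (Terminates P' (X.dot M) ↔ Terminates P' (X.dot N))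

/-- Renaming of names in a term. -/
def Tm.rename (f : ℕ → ℕ) : Tm → Tm
  | .name n => .name (f n)
  | .dot a b => .dot (a.rename f) (b.rename f)

/-- Renaming of names in a right-hand side. -/
def Rhs.rename (f : ℕ → ℕ) : Rhs → Rhs
  | .name n => .name (f n)
  | .var v => .var v
  | .dot a b => .dot (a.rename f) (b.rename f)

/-- Renaming of names in a rule. -/
def Rule.rename (f : ℕ → ℕ) (r : Rule) : Rule :=
  ⟨f r.head, r.arity, r.rhs.rename f⟩

/-- Renaming of names in a program. -/
def Program.rename (f : ℕ → ℕ) (P : Program) : Program :=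
  P.image (Rule.rename f)

/-- The fresh substitution `[n⃗ := m⃗]` as a function on names. -/
def renFun (ns ms : List ℕ) (n : ℕ) : ℕ :=
  ((ns.zip ms).lookup n).getD n

/-- `M` has arity `k` under `P`: `M = n.q₁.⋯.qᵢ` where `n` has a rule of
arity `i + k`. -/
def Tm.ArityIs (P : Program) (M : Tm) (k : ℕ) : Prop :=
  ∃ r ∈ P, ∃ ts : List Tm, M = Tm.apps (.name r.head) ts ∧ ts.length + k = r.arity

/-!
If `Q ⊇ P` is any test program, rename the names defined by `P' ∖ P` everywhere in `Q` and in the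
context `X` to names that occur nowhere else. This permutation of names fixes `M`, `N` and `P`,
and termination is invariant under renaming. The renamed `Q` is compatible with `P'`, so their union
is a well-formed extension of `P'`, where `M ≈_{P'} N` applies; and dropping the rules of `P' ∖ P`
from that union does not change termination, because their heads occur neither in the renamed
program nor in the tested terms.
-/

theorem Step.mono {R R' : Program} (h : R ⊆ R') {t u : Tm} (hs : Step R t u) : Step R' t u :=
  let ⟨r, hr, rest⟩ := hs
  ⟨r, h hr, rest⟩

theorem Steps.mono {R R' : Program} (h : R ⊆ R') {t u : Tm} (hs : Steps R t u) : Steps R' t u :=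
  Relation.ReflTransGen.mono (fun _ _ => Step.mono h) _ _ hs

theorem ObsEq.mono {P P' : Program} (h : P ⊆ P') {M N : Tm} (hMN : ObsEq P M N) :
    ObsEq P' M N :=
  fun Q hQ hP'Q => hMN Q hQ (h.trans hP'Q)

section Extension

theorem Tm.hasName_apps {h : Tm} {ts : List Tm} {m : ℕ} :
    (Tm.apps h ts).HasName m ↔ h.HasName m ∨ ∃ t ∈ ts, t.HasName m := by
  induction ts generalizing h with
  | nil => simp [Tm.apps]
  | cons t ts ih =>
    simp only [Tm.apps, ih, Tm.HasName, List.exists_mem_cons_iff]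
    tauto

theorem Rhs.hasName_of_inst {ts : List Tm} {r : Rhs} {u : Tm} {m : ℕ}
    (h : r.inst ts = some u) (hu : u.HasName m) : r.HasName m ∨ ∃ t ∈ ts, t.HasName m := by
  induction r generalizing u with
  | name n =>
    simp only [Rhs.inst, Option.some.injEq] at h
    subst h
    exact .inl hu
  | var v => exact .inr ⟨u, List.mem_of_getElem? h, hu⟩
  | dot a c iha ihc =>
    simp only [Rhs.inst, Option.pure_def, Option.bind_eq_bind, Option.bind_eq_some_iff,
      Option.some.injEq] at h
    obtain ⟨ua, ha, uc, hc, rfl⟩ := h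
    rcases hu with hu | hu
    · exact (iha ha hu).imp_left .inl
    · exact (ihc hc hu).imp_left .inr

theorem Step.not_hasName {R : Program} {m : ℕ} (hR : ¬ R.HasName m) {t u : Tm}
    (ht : ¬ t.HasName m) (hs : Step R t u) : ¬ u.HasName m := by
  obtain ⟨r, hr, ts, -, rfl, hinst⟩ := hs
  intro hu
  rcases Rhs.hasName_of_inst hinst hu with hrhs | hts
  · exact hR ⟨r, hr, .inr hrhs⟩
  · exact ht (Tm.hasName_apps.mpr (.inr hts))

variable {R R' : Program} {H : Set ℕ}

theorem Steps.forall_not_hasName (hR : ∀ m ∈ H, ¬ R.HasName m) {t u : Tm} (hs : Steps R t u)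
    (ht : ∀ m ∈ H, ¬ t.HasName m) : ∀ m ∈ H, ¬ u.HasName m := by
  induction hs with
  | refl => exact ht
  | tail _ hstep ih => exact fun m hm => Step.not_hasName (hR m hm) (ih m hm) hstep

theorem step_iff_of_fresh (hRR' : R ⊆ R') (hR' : ∀ r ∈ R', r ∈ R ∨ r.head ∈ H) {t u : Tm}
    (ht : ∀ m ∈ H, ¬ t.HasName m) : Step R' t u ↔ Step R t u := by
  refine ⟨fun ⟨r, hr, ts, hlen, hrt, hinst⟩ => ?_, Step.mono hRR'⟩
  rcases hR' r hr with hrR | hH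
  · exact ⟨r, hrR, ts, hlen, hrt, hinst⟩
  · subst hrt
    exact (ht _ hH (Tm.hasName_apps.mpr (.inl rfl))).elim

theorem steps_iff_of_fresh (hRR' : R ⊆ R') (hR' : ∀ r ∈ R', r ∈ R ∨ r.head ∈ H)
    (hR : ∀ m ∈ H, ¬ R.HasName m) {t u : Tm} (ht : ∀ m ∈ H, ¬ t.HasName m) :
    Steps R' t u ↔ Steps R t u := by
  refine ⟨fun hs => ?_, Steps.mono hRR'⟩
  induction hs using Relation.ReflTransGen.head_induction_on with
  | refl => exact .refl
  | head hstep _ ih =>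
    have hstep := (step_iff_of_fresh hRR' hR' ht).mp hstep
    exact .head hstep (ih fun m hm => Step.not_hasName (hR m hm) (ht m hm) hstep)

theorem terminates_iff_of_fresh (hRR' : R ⊆ R') (hR' : ∀ r ∈ R', r ∈ R ∨ r.head ∈ H)
    (hR : ∀ m ∈ H, ¬ R.HasName m) {t : Tm} (ht : ∀ m ∈ H, ¬ t.HasName m) :
    Terminates R' t ↔ Terminates R t := by
  refine exists_congr fun u => ?_
  rw [steps_iff_of_fresh hRR' hR' hR ht]
  refine and_congr_right fun hs => ?_
  simp only [Final, step_iff_of_fresh hRR' hR' (hs.forall_not_hasName hR ht)]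

end Extension

theorem Program.Wf.union_of_fresh {R S : Program} {H : Set ℕ} (hR : R.Wf) (hS : S.Wf)
    (hSR : ∀ s ∈ S, s ∈ R ∨ s.head ∈ H) (hRH : ∀ m ∈ H, ¬ R.HasName m) : (R ∪ S).Wf := by
  have compat : ∀ r ∈ R, ∀ s ∈ S, r.head = s.head → r = s := fun r hr s hs hrs =>
    (hSR s hs).elim (hR.2 r hr s · hrs) fun hsH => absurd ⟨r, hr, .inl hrs⟩ (hRH _ hsH)
  refine ⟨fun r hr => (Finset.mem_union.mp hr).elim (hR.1 r) (hS.1 r), fun r hr s hs hrs => ?_⟩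
  rcases Finset.mem_union.mp hr with hr | hr <;> rcases Finset.mem_union.mp hs with hs | hs
  exacts [hR.2 r hr s hs hrs, compat r hr s hs hrs, (compat s hs r hr hrs.symm).symm,
    hS.2 r hr s hs hrs]

section Renaming

variable {f g : ℕ → ℕ}

namespace Tm

theorem rename_apps (h : Tm) (ts : List Tm) :
    (Tm.apps h ts).rename f = Tm.apps (h.rename f) (ts.map (Tm.rename f)) := by
  induction ts generalizing h with
  | nil => rfl
  | cons t ts ih => simp [Tm.apps, ih, Tm.rename]

theorem rename_rename (t : Tm) : (t.rename f).rename g = t.rename (g ∘ f) := by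
  induction t <;> simp [Tm.rename, *]

theorem rename_id (t : Tm) : t.rename id = t := by
  induction t <;> simp [Tm.rename, *]

theorem rename_symm_rename (e : Equiv.Perm ℕ) (t : Tm) : (t.rename e).rename e.symm = t := by
  rw [rename_rename, Equiv.symm_comp_self, rename_id]

theorem hasName_rename {t : Tm} {m : ℕ} :
    (t.rename f).HasName m ↔ ∃ n, t.HasName n ∧ f n = m := by
  induction t with
  | name k => simp [Tm.rename, Tm.HasName]
  | dot a b iha ihb =>
    simp only [Tm.rename, Tm.HasName, iha, ihb]
    grind

theorem rename_eq_self {t : Tm} (h : ∀ m, t.HasName m → f m = m) : t.rename f = t := by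
  induction t with
  | name n => simp [Tm.rename, h n rfl]
  | dot a b iha ihb =>
    simp only [Tm.rename, Tm.dot.injEq]
    exact ⟨iha fun m hm => h m (.inl hm), ihb fun m hm => h m (.inr hm)⟩

end Tm

namespace Rhs

theorem rename_rename (r : Rhs) : (r.rename f).rename g = r.rename (g ∘ f) := by
  induction r <;> simp [Rhs.rename, *]

theorem rename_id (r : Rhs) : r.rename id = r := by
  induction r <;> simp [Rhs.rename, *]

theorem hasName_rename {r : Rhs} {m : ℕ} :
    (r.rename f).HasName m ↔ ∃ n, r.HasName n ∧ f n = m := by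
  induction r with
  | name k => simp [Rhs.rename, Rhs.HasName]
  | var v => simp [Rhs.rename, Rhs.HasName]
  | dot a b iha ihb =>
    simp only [Rhs.rename, Rhs.HasName, iha, ihb]
    grind

theorem hasVar_rename {r : Rhs} {v : ℕ} : (r.rename f).HasVar v ↔ r.HasVar v := by
  induction r <;> simp [Rhs.rename, Rhs.HasVar, *]

theorem rename_eq_self {r : Rhs} (h : ∀ m, r.HasName m → f m = m) : r.rename f = r := by
  induction r with
  | name n => simp [Rhs.rename, h n rfl]
  | var v => rfl
  | dot a b iha ihb =>
    simp only [Rhs.rename, Rhs.dot.injEq]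
    exact ⟨iha fun m hm => h m (.inl hm), ihb fun m hm => h m (.inr hm)⟩

theorem inst_rename {ts : List Tm} {r : Rhs} {u : Tm} (h : r.inst ts = some u) :
    (r.rename f).inst (ts.map (Tm.rename f)) = some (u.rename f) := by
  induction r generalizing u with
  | name n =>
    simp only [Rhs.inst, Option.some.injEq] at h
    simp [Rhs.inst, Rhs.rename, ← h, Tm.rename]
  | var v =>
    simp only [Rhs.inst] at h
    simp [Rhs.rename, Rhs.inst, h]
  | dot a c iha ihc =>
    simp only [Rhs.inst, Option.pure_def, Option.bind_eq_bind, Option.bind_eq_some_iff,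
      Option.some.injEq] at h
    obtain ⟨ua, ha, uc, hc, rfl⟩ := h
    simp [Rhs.rename, Rhs.inst, iha ha, ihc hc, Tm.rename]

end Rhs

theorem Rule.rename_rename (r : Rule) : (r.rename f).rename g = r.rename (g ∘ f) := by
  simp [Rule.rename, Rhs.rename_rename]

theorem Rule.rename_id (r : Rule) : r.rename id = r := by
  simp [Rule.rename, Rhs.rename_id]

namespace Program

theorem rename_rename (P : Program) : (P.rename f).rename g = P.rename (g ∘ f) := by
  simp only [Program.rename, Finset.image_image]
  congr 1
  exact funext Rule.rename_rename

theorem rename_id (P : Program) : P.rename id = P := by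
  simp [Program.rename, funext Rule.rename_id]

theorem rename_symm_rename (e : Equiv.Perm ℕ) (P : Program) :
    (P.rename e).rename e.symm = P := by
  rw [rename_rename, Equiv.symm_comp_self, rename_id]

theorem hasName_rename {P : Program} {m : ℕ} :
    (P.rename f).HasName m ↔ ∃ n, P.HasName n ∧ f n = m := by
  simp only [Program.HasName, Program.rename, Finset.exists_mem_image, Rule.rename,
    Rhs.hasName_rename]
  grind

theorem subset_rename {P Q : Program} (hPQ : P ⊆ Q) (hP : ∀ m, P.HasName m → f m = m) :
    P ⊆ Q.rename f := by
  intro r hr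
  have hr' : r.rename f = r := by
    simp only [Rule.rename, hP r.head ⟨r, hr, .inl rfl⟩,
      Rhs.rename_eq_self fun m hm => hP m ⟨r, hr, .inr hm⟩]
  exact hr' ▸ Finset.mem_image_of_mem _ (hPQ hr)

theorem Wf.rename {P : Program} (hP : P.Wf) (hf : f.Injective) : (P.rename f).Wf := by
  simp only [Program.Wf, Program.rename, Finset.forall_mem_image, Rule.rename,
    Rhs.hasVar_rename, Rule.mk.injEq] at hP ⊢
  exact ⟨hP.1, fun r hr s hs hrs => by obtain rfl := hP.2 r hr s hs (hf hrs); simp⟩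

end Program

end Renaming

theorem Step.rename (f : ℕ → ℕ) {Q : Program} {t u : Tm} (h : Step Q t u) :
    Step (Q.rename f) (t.rename f) (u.rename f) := by
  obtain ⟨r, hr, ts, hlen, rfl, hinst⟩ := h
  exact ⟨r.rename f, Finset.mem_image_of_mem _ hr, ts.map (Tm.rename f),
    by simpa [Rule.rename] using hlen, Tm.rename_apps _ ts, Rhs.inst_rename hinst⟩

theorem Steps.rename (f : ℕ → ℕ) {Q : Program} {t u : Tm} (h : Steps Q t u) :
    Steps (Q.rename f) (t.rename f) (u.rename f) :=
  Relation.ReflTransGen.lift (Tm.rename f) (fun _ _ => Step.rename f) _ _ h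

theorem Terminates.rename (e : Equiv.Perm ℕ) {Q : Program} {t : Tm} (h : Terminates Q t) :
    Terminates (Q.rename e) (t.rename e) := by
  obtain ⟨u, hs, hfin⟩ := h
  refine ⟨u.rename e, hs.rename e, fun ⟨v, hv⟩ => hfin ⟨v.rename e.symm, ?_⟩⟩
  simpa only [Program.rename_symm_rename, Tm.rename_symm_rename] using hv.rename e.symm

theorem terminates_rename_iff (e : Equiv.Perm ℕ) {Q : Program} {t : Tm} :
    Terminates (Q.rename e) (t.rename e) ↔ Terminates Q t := by
  refine ⟨fun h => ?_, Terminates.rename e⟩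
  simpa only [Program.rename_symm_rename, Tm.rename_symm_rename] using h.rename e.symm

theorem Tm.finite_setOf_hasName (t : Tm) : {m | t.HasName m}.Finite := by
  induction t with
  | name n => simp [Tm.HasName, Set.ofPred_eq_eq_singleton']
  | dot a b iha ihb => simpa only [Tm.HasName, Set.ofPred_or] using iha.union ihb

theorem Rhs.finite_setOf_hasName (r : Rhs) : {m | r.HasName m}.Finite := by
  induction r with
  | name n => simp [Rhs.HasName, Set.ofPred_eq_eq_singleton']
  | var v => simp [Rhs.HasName]
  | dot a b iha ihb => simpa only [Rhs.HasName, Set.ofPred_or] using iha.union ihb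

theorem Program.finite_setOf_hasName (P : Program) : {m | P.HasName m}.Finite := by
  refine (P.finite_toSet.biUnion fun r _ =>
    (Set.finite_singleton r.head).union r.rhs.finite_setOf_hasName).subset ?_
  rintro m ⟨r, hr, hm⟩
  exact Set.mem_biUnion hr (hm.imp Eq.symm id)

/-- The witness swaps each `h ∈ H` with `h + B`, where `B` exceeds every element of `H ∪ S ∪ T`. -/
theorem exists_perm_avoiding {H S T : Set ℕ} (hH : H.Finite) (hS : S.Finite) (hT : T.Finite)
    (hTH : ∀ n ∈ T, n ∉ H) : ∃ e : Equiv.Perm ℕ, (∀ n ∈ S, e n ∉ H) ∧ ∀ n ∈ T, e n = n := by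
  classical
  obtain ⟨b, hb⟩ := ((hH.union hS).union hT).bddAbove
  set B := b + 1
  have hlt : ∀ n ∈ H ∪ S ∪ T, n < B := fun n hn => Nat.lt_succ_of_le (hb hn)
  let f : ℕ → ℕ := fun n => if n ∈ H then n + B else if B ≤ n ∧ n - B ∈ H then n - B else n
  have hf : Function.Involutive f := by
    intro n
    by_cases hn : n ∈ H
    · have : n + B ∉ H := fun h => by have := hlt _ (.inl (.inl h)); omega
      simp [f, hn, this]
    · by_cases hn' : B ≤ n ∧ n - B ∈ H
      · have : n - B + B = n := by omega
        simp [f, hn, hn', this]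
      · simp [f, hn, hn']
  have hfix : ∀ n < B, n ∉ H → f n = n := fun n hnB hnH => by
    simp only [f, if_neg hnH, if_neg fun h : B ≤ n ∧ n - B ∈ H => absurd h.1 (by omega)]
  refine ⟨hf.toPerm f, fun n hn hfn => ?_, fun n hn => hfix n (hlt n (.inr hn)) (hTH n hn)⟩
  have hnB := hlt n (.inl (.inr hn))
  have hfnB := hlt _ (.inl (.inl hfn))
  by_cases hnH : n ∈ H
  · simp [f, hnH] at hfnB
  · exact hnH (hfix n hnB hnH ▸ hfn)

theorem ObsEq.of_fresh_extension {P P' : Program} (hP' : P'.Wf) {M N : Tm}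
    (hfresh : ∀ r ∈ P', r ∉ P →
      ¬ Tm.HasName r.head M ∧ ¬ Tm.HasName r.head N ∧ ¬ P.HasName r.head)
    (h : ObsEq P' M N) : ObsEq P M N := by
  classical
  intro Q hQ hPQ X
  set H : Set ℕ := ↑((P' \ P).image Rule.head)
  have hH : ∀ m, (P.HasName m ∨ M.HasName m ∨ N.HasName m) → m ∉ H := by
    intro m hm hmH
    obtain ⟨r, hr, rfl⟩ := Finset.mem_image.mp hmH
    obtain ⟨hrP', hrP⟩ := Finset.mem_sdiff.mp hr
    have := hfresh r hrP' hrP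
    tauto
  obtain ⟨e, hmove, hfix⟩ := exists_perm_avoiding (Finset.finite_toSet _)
    (Q.finite_setOf_hasName.union X.finite_setOf_hasName)
    (P.finite_setOf_hasName.union (M.finite_setOf_hasName.union N.finite_setOf_hasName)) hH
  simp only [Set.mem_union, Set.mem_ofPred_eq] at hmove hfix
  have hQe : ∀ m ∈ H, ¬ (Q.rename e).HasName m := fun m hm hQm => by
    obtain ⟨n, hn, rfl⟩ := Program.hasName_rename.mp hQm
    exact hmove n (.inl hn) hm
  have hXe : ∀ m ∈ H, ¬ (X.rename e).HasName m := fun m hm hXm => by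
    obtain ⟨n, hn, rfl⟩ := Tm.hasName_rename.mp hXm
    exact hmove n (.inr hn) hm
  have hPQe : P ⊆ Q.rename e := Program.subset_rename hPQ fun m hm => hfix m (.inl hm)
  have hcover : ∀ r ∈ P', r ∈ Q.rename e ∨ r.head ∈ H := fun r hr =>
    (em (r ∈ P)).imp (hPQe ·) fun hrP => Finset.mem_image_of_mem _ (Finset.mem_sdiff.mpr ⟨hr, hrP⟩)
  have key : ∀ T : Tm, (∀ m, T.HasName m → P.HasName m ∨ M.HasName m ∨ N.HasName m) →
      (Terminates Q (X.dot T) ↔ Terminates (Q.rename e ∪ P') ((X.rename e).dot T)) := by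
    intro T hT
    have hTe : T.rename e = T := Tm.rename_eq_self fun m hm => hfix m (hT m hm)
    have hTH : ∀ m ∈ H, ¬ T.HasName m := fun m hmH hm => hH m (hT m hm) hmH
    rw [terminates_iff_of_fresh Finset.subset_union_left
      (fun r hr => (Finset.mem_union.mp hr).elim .inl (hcover r)) hQe
      fun m hm => by rintro (hX | hT); exacts [hXe m hm hX, hTH m hm hT],
      ← terminates_rename_iff e]
    simp only [Tm.rename, hTe]
  rw [key M fun _ => (.inr <| .inl ·), key N fun _ => (.inr <| .inr ·)]
  exact h _ ((hQ.rename e.injective).union_of_fresh hP' hcover hQe) Finset.subset_union_right _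

theorem obsEq_conservative_extension_general (P P' : Program) (hP' : P'.Wf)
    (hsub : P ⊆ P') (M N : Tm)
    (hfresh : ∀ r ∈ P', r ∉ P →
      ¬ Tm.HasName r.head M ∧ ¬ Tm.HasName r.head N ∧ ¬ P.HasName r.head) :
    ObsEq P M N ↔ ObsEq P' M N :=
  ⟨ObsEq.mono hsub, ObsEq.of_fresh_extension hP' hfresh⟩

theorem obsEq_conservative_extension (P P' : Program) (hP : P.Wf) (hP' : P'.Wf)
    (hsub : P ⊆ P') (M N : Tm)
    (hfresh : ∀ r ∈ P', r ∉ P →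
      ¬ Tm.HasName r.head M ∧ ¬ Tm.HasName r.head N ∧ ¬ P.HasName r.head) :
    ObsEq P M N ↔ ObsEq P' M N :=
  obsEq_conservative_extension_general P P' hP' hsub M N hfresh
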